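/- A row contraction T : H^d → H satisfying H = span closure of { (I - Tz*)^{-1} D_{T*} h : z ∈ 𝔹^d, h ∈ H } is completely non-coisometric: there is no nonzero closed subspace H' ⊆ H, co-invariant for each T_k, on which T* acts isometrically. -/

import Mathlib

open ContinuousLinearMap

set_option synthInstance.maxHeartbeats 1000000
set_option maxHeartbeats 1000000

noncomputable section

instance piLpComplete {d : ℕ} {H : Type*} [NormedAddCommGroup H]
    [InnerProductSpace ℂ H] [CompleteSpace H] :
    CompleteSpace (PiLp 2 fun _ : Fin d => H) :=
  inferInstance

/-- The row operator `z : H^d → H`, `(h₁,...,h_d) ↦ Σ zⱼ hⱼ`, for a scalar row `z ∈ ℂ^d`. -/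
def rowOp {d : ℕ} {H : Type*} [NormedAddCommGroup H] [InnerProductSpace ℂ H]
    (z : EuclideanSpace ℂ (Fin d)) : PiLp 2 (fun _ : Fin d => H) →L[ℂ] H :=
  ∑ j, z j • ((ContinuousLinearMap.proj j : (∀ _ : Fin d, H) →L[ℂ] H).comp
    (PiLp.continuousLinearEquiv 2 ℂ (fun _ : Fin d => H)).toContinuousLinearMap)

/-- The column operator `z* : H → H^d`, `h ↦ (z̄₁ h, ..., z̄_d h)`; the adjoint of `rowOp z`. -/
def colOp {d : ℕ} {H : Type*} [NormedAddCommGroup H] [InnerProductSpace ℂ H]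
    (z : EuclideanSpace ℂ (Fin d)) : H →L[ℂ] PiLp 2 (fun _ : Fin d => H) :=
  ((PiLp.continuousLinearEquiv 2 ℂ (fun _ : Fin d => H)).symm.toContinuousLinearMap).comp
    (ContinuousLinearMap.pi fun j => (starRingEnd ℂ (z j)) • ContinuousLinearMap.id ℂ H)

/-- Ampliation `A ⊗ I_d` of an operator `A : H → J` acting componentwise on columns. -/
def liftD {d : ℕ} {H J : Type*} [NormedAddCommGroup H] [InnerProductSpace ℂ H]
    [NormedAddCommGroup J] [InnerProductSpace ℂ J] (A : H →L[ℂ] J) :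
    PiLp 2 (fun _ : Fin d => H) →L[ℂ] PiLp 2 (fun _ : Fin d => J) :=
  ((PiLp.continuousLinearEquiv 2 ℂ (fun _ : Fin d => J)).symm.toContinuousLinearMap).comp <|
    (ContinuousLinearMap.pi fun j =>
      A.comp ((ContinuousLinearMap.proj j : (∀ _ : Fin d, H) →L[ℂ] H))).comp
    (PiLp.continuousLinearEquiv 2 ℂ (fun _ : Fin d => H)).toContinuousLinearMap

/-!
If `T*` is isometric on a closed co-invariant subspace `H'`, then
`‖D_{T*} h‖² = ‖h‖² - ‖T* h‖² = 0`, so `D_{T*}` vanishes on `H'`. For `‖z‖ < 1` the adjoint of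
`(1 - Tz*)⁻¹` is the Neumann series `Σ (zT*)ⁿ`, which maps `H'` into itself because `H'` is
closed and invariant under `zT* = Σ zⱼ Tⱼ*`. Hence
`⟪(1 - Tz*)⁻¹ D_{T*} x, h⟫ = ⟪x, D_{T*} (1 - zT*)⁻¹ h⟫ = 0` for `h ∈ H'`: the CCNC span lies in
`H'ᗮ`, which is therefore all of `H`.
-/

section Neumann

variable {𝕜 E : Type*} [NontriviallyNormedField 𝕜] [NormedAddCommGroup E] [NormedSpace 𝕜 E]
  [CompleteSpace E]

theorem Submodule.ringInverse_one_sub_apply_mem {B : E →L[𝕜] E} (hB : ‖B‖ < 1)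
    {K : Submodule 𝕜 E} (hK : IsClosed (K : Set E)) (hBK : ∀ y ∈ K, B y ∈ K) {y : E}
    (hy : y ∈ K) : Ring.inverse (1 - B) y ∈ K := by
  have hsum : HasSum (fun n : ℕ => (B ^ n) y) (Ring.inverse (1 - B) y) :=
    (hasSum_geom_series_inverse B hB).mapL (ContinuousLinearMap.apply 𝕜 E y)
  refine hK.mem_of_tendsto hsum.tendsto_sum_nat (Filter.Eventually.of_forall fun n => ?_)
  refine K.sum_mem fun i _ => ?_
  simpa only [← toLinearMap_pow, coe_coe] using
    Module.End.pow_apply_mem_of_forall_mem (f' := (B : E →ₗ[𝕜] E)) i hBK y hy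

end Neumann

section Hilbert

open scoped InnerProductSpace

variable {𝕜 E F : Type*} [RCLike 𝕜] [NormedAddCommGroup E] [InnerProductSpace 𝕜 E]
  [CompleteSpace E] [NormedAddCommGroup F] [InnerProductSpace 𝕜 F] [CompleteSpace F]

theorem ContinuousLinearMap.adjoint_ringInverse_one_sub (A : E →L[𝕜] E) :
    adjoint (Ring.inverse (1 - A)) = Ring.inverse (1 - adjoint A) := by
  simp only [← star_eq_adjoint, ← Ring.inverse_star, star_sub, star_one]

theorem norm_apply_sq_of_comp_self_eq_one_sub {T : F →L[𝕜] E} {D : E →L[𝕜] E}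
    (hD : IsSelfAdjoint D) (hDT : D ∘L D = 1 - T ∘L adjoint T) (x : E) :
    ‖D x‖ ^ 2 = ‖x‖ ^ 2 - ‖adjoint T x‖ ^ 2 := by
  have h : ⟪D x, D x⟫_𝕜 = ⟪x, x⟫_𝕜 - ⟪adjoint T x, adjoint T x⟫_𝕜 := by
    rw [← adjoint_inner_right, hD.adjoint_eq, ← comp_apply, hDT, sub_apply,
      one_apply_eq_self, comp_apply, inner_sub_right, ← adjoint_inner_left]
  simp only [inner_self_eq_norm_sq_to_K] at h
  exact_mod_cast h

theorem apply_eq_zero_of_comp_self_eq_one_sub {T : F →L[𝕜] E} {D : E →L[𝕜] E}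
    (hD : IsSelfAdjoint D) (hDT : D ∘L D = 1 - T ∘L adjoint T) {x : E}
    (hx : ‖adjoint T x‖ = ‖x‖) : D x = 0 := by
  have := norm_apply_sq_of_comp_self_eq_one_sub hD hDT x
  rwa [hx, sub_self, sq_eq_zero_iff, norm_eq_zero] at this

theorem map_ringInverse_one_sub_range_le_orthogonal {A D : E →L[𝕜] E} (hA : ‖A‖ < 1)
    (hD : IsSelfAdjoint D) {K : Submodule 𝕜 E} (hK : IsClosed (K : Set E))
    (hAK : ∀ y ∈ K, adjoint A y ∈ K) (hDK : ∀ y ∈ K, D y = 0) :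
    (LinearMap.range (D : E →ₗ[𝕜] E)).map
      ((Ring.inverse (1 - A) : E →L[𝕜] E) : E →ₗ[𝕜] E) ≤ Kᗮ := by
  rintro _ ⟨_, ⟨x, rfl⟩, rfl⟩
  rw [Submodule.mem_orthogonal']
  intro y hy
  have hB : ‖adjoint A‖ < 1 := by rwa [LinearIsometryEquiv.norm_map]
  have hmem := Submodule.ringInverse_one_sub_apply_mem hB hK hAK hy
  calc ⟪Ring.inverse (1 - A) (D x), y⟫_𝕜 = ⟪x, D (Ring.inverse (1 - adjoint A) y)⟫_𝕜 := by
        rw [← adjoint_inner_right, adjoint_ringInverse_one_sub]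
        exact hD.isSymmetric _ _
    _ = 0 := by rw [hDK _ hmem, inner_zero_right]

end Hilbert

section RowColumn

variable {d : ℕ} {H : Type*} [NormedAddCommGroup H] [InnerProductSpace ℂ H]

theorem colOp_apply (z : EuclideanSpace ℂ (Fin d)) (h : H) (j : Fin d) :
    colOp z h j = starRingEnd ℂ (z j) • h :=
  rfl

theorem rowOp_apply (z : EuclideanSpace ℂ (Fin d)) (x : PiLp 2 (fun _ : Fin d => H)) :
    rowOp z x = ∑ j, z j • x j := by
  simp [rowOp]

theorem norm_colOp_apply (z : EuclideanSpace ℂ (Fin d)) (h : H) :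
    ‖colOp z h‖ = ‖z‖ * ‖h‖ := by
  rw [← sq_eq_sq₀ (norm_nonneg _) (by positivity), PiLp.norm_sq_eq_of_L2, mul_pow,
    EuclideanSpace.norm_sq_eq, Finset.sum_mul]
  simp only [colOp_apply, norm_smul, RCLike.norm_conj, mul_pow]

theorem norm_colOp_le (z : EuclideanSpace ℂ (Fin d)) : ‖(colOp z : H →L[ℂ] _)‖ ≤ ‖z‖ :=
  opNorm_le_bound _ (norm_nonneg z) fun h => (norm_colOp_apply z h).le

theorem norm_comp_colOp_lt_one {T : PiLp 2 (fun _ : Fin d => H) →L[ℂ] H} (hT : ‖T‖ ≤ 1)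
    {z : EuclideanSpace ℂ (Fin d)} (hz : ‖z‖ < 1) : ‖T ∘L colOp z‖ < 1 :=
  calc ‖T ∘L colOp z‖ ≤ ‖T‖ * ‖(colOp z : H →L[ℂ] _)‖ := opNorm_comp_le _ _
    _ ≤ 1 * ‖z‖ := mul_le_mul hT (norm_colOp_le z) (opNorm_nonneg _) zero_le_one
    _ < 1 := by rwa [one_mul]

variable [CompleteSpace H]

theorem adjoint_colOp (z : EuclideanSpace ℂ (Fin d)) :
    adjoint (colOp z) = rowOp (H := H) z := by
  refine ((eq_adjoint_iff _ _).mpr fun x y => ?_).symm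
  simp only [rowOp_apply, sum_inner, PiLp.inner_apply, colOp_apply, inner_smul_left,
    inner_smul_right]

theorem adjoint_comp_colOp_apply (T : PiLp 2 (fun _ : Fin d => H) →L[ℂ] H)
    (z : EuclideanSpace ℂ (Fin d)) (h : H) :
    adjoint (T ∘L colOp z) h = ∑ j, z j • adjoint T h j := by
  rw [adjoint_comp, comp_apply, adjoint_colOp, rowOp_apply]

end RowColumn

/-- A row contraction `T : H^d → H` satisfying the CCNC spanning condition
`H = ⋁_{z ∈ 𝔹^d} (1 - Tz*)⁻¹ ran D_{T*}` is completely non-coisometric: there is no nonzero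
closed subspace of `H`, co-invariant for the components of `T`, on which `T*` acts
isometrically. -/
theorem stmt_6 {d : ℕ} {H : Type*} [NormedAddCommGroup H] [InnerProductSpace ℂ H]
    [CompleteSpace H]
    (T : PiLp 2 (fun _ : Fin d => H) →L[ℂ] H) (hT : ‖T‖ ≤ 1)
    (D' : H →L[ℂ] H) (hD' : D'.IsPositive)
    (hD'2 : D' ∘L D' = 1 - T ∘L (adjoint T))
    (hspan : (⨆ z : {z : EuclideanSpace ℂ (Fin d) // ‖z‖ < 1},
        Submodule.map ((Ring.inverse (1 - T ∘L colOp z.1) : H →L[ℂ] H) : H →ₗ[ℂ] H)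
          (LinearMap.range (D' : H →ₗ[ℂ] H))).topologicalClosure = ⊤) :
    ∀ H' : Submodule ℂ H, IsClosed (H' : Set H) →
      (∀ h ∈ H', ∀ k : Fin d, ((adjoint T) h) k ∈ H') →
      (∀ h ∈ H', ‖(adjoint T) h‖ = ‖h‖) →
      H' = ⊥ := by
  intro H' hH' hcoinv hisom
  have hdefect : ∀ h ∈ H', D' h = 0 := fun h hh =>
    apply_eq_zero_of_comp_self_eq_one_sub hD'.isSelfAdjoint hD'2 (hisom h hh)
  have hinv : ∀ z : EuclideanSpace ℂ (Fin d), ∀ h ∈ H', adjoint (T ∘L colOp z) h ∈ H' :=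
    fun z h hh => by
      rw [adjoint_comp_colOp_apply]
      exact H'.sum_mem fun j _ => H'.smul_mem _ (hcoinv h hh j)
  have hgen := iSup_le fun z : {z : EuclideanSpace ℂ (Fin d) // ‖z‖ < 1} =>
    map_ringInverse_one_sub_range_le_orthogonal (norm_comp_colOp_lt_one hT z.2)
      hD'.isSelfAdjoint hH' (hinv z) hdefect
  rw [← Submodule.orthogonal_eq_top_iff, eq_top_iff, ← hspan]
  exact Submodule.topologicalClosure_minimal _ hgen H'.isClosed_orthogonal

end
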